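/- (Linear rate 1/2 for the shifted parabola.) In ℝ², let A = ℝ × {0} and B = {(u, v) : v ≥ 1 + u²/2}. For each x ∈ ℝ, the equation u·(2 + u²/2) = x has a unique real solution u = T(x), and the unique nearest point of B to (x, 0) is (T(x), 1 + T(x)²/2), while the unique nearest point of A to any (u, v) with v > 0 is (u, 0). Consequently the alternating projection sequence started at a₁ = (x₁, 0) with x₁ ≠ 0 is given by a_k = (x_k, 0) and b_k = (x_{k+1}, 1 + x_{k+1}²/2) with x_{k+1} = T(x_k), and it satisfies x_k → 0, x_{k+1}/x_k → 1/2, a_k → (0, 0), b_k → (0, 1); in particular the alternating projections converge to the gap pair ((0,0), (0,1)) with distance 1 at an asymptotic linear rate 1/2. -/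

import Mathlib

/-!
Minimizing the squared distance `(x - t)² + (1 + t²/2)²` from `(x, 0)` to the boundary of `B`
gives the critical-point equation `t (2 + t²/2) = x`; the difference from the minimum factors as
`(t - u)² ((t + u)² + 2u² + 8)/4`, so the minimizer is unique. From `x = u (2 + u²/2)` we get
`|u| ≤ |x|/2`, so the iterates decay geometrically, and `x_{k+1}/x_k = 1/(2 + x_{k+1}²/2) → 1/2`.
-/

open Set Metric Filter Topology

noncomputable section

/-- The (possibly multivalued) metric projection onto a set `S`. -/
def projSet {E : Type*} [NormedAddCommGroup E] (S : Set E) (x : E) : Set E :=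
  {s | s ∈ S ∧ ‖x - s‖ = Metric.infDist x S}

/-- A point of ℝ². -/
def pt2 (a b : ℝ) : EuclideanSpace ℝ (Fin 2) :=
  (WithLp.equiv 2 (Fin 2 → ℝ)).symm ![a, b]

/-- The horizontal axis `A = ℝ × {0}`. -/
def axisA : Set (EuclideanSpace ℝ (Fin 2)) := {p | p 1 = 0}

/-- The shifted parabola epigraph `B = {(u,v) : v ≥ 1 + u²/2}`. -/
def parabB : Set (EuclideanSpace ℝ (Fin 2)) := {p | 1 + (p 0)^2/2 ≤ p 1}

@[simp] lemma pt2_apply_zero (a b : ℝ) : pt2 a b 0 = a := rfl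

@[simp] lemma pt2_apply_one (a b : ℝ) : pt2 a b 1 = b := rfl

lemma pt2_eta (p : EuclideanSpace ℝ (Fin 2)) : pt2 (p 0) (p 1) = p := by
  ext i; fin_cases i <;> rfl

lemma dist_pt2 (a b c d : ℝ) : dist (pt2 a b) (pt2 c d) = √((a - c) ^ 2 + (b - d) ^ 2) := by
  simp [EuclideanSpace.dist_eq, Fin.sum_univ_two, Real.dist_eq, sq_abs]

lemma dist_pt2_lt_dist_pt2 {a b c d e f : ℝ}
    (h : (a - c) ^ 2 + (b - d) ^ 2 < (a - e) ^ 2 + (b - f) ^ 2) :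
    dist (pt2 a b) (pt2 c d) < dist (pt2 a b) (pt2 e f) := by
  rw [dist_pt2, dist_pt2]
  exact Real.sqrt_lt_sqrt (by positivity) h

lemma Filter.Tendsto.pt2 {ι : Type*} {l : Filter ι} {f g : ι → ℝ} {a b : ℝ}
    (hf : Tendsto f l (𝓝 a)) (hg : Tendsto g l (𝓝 b)) :
    Tendsto (fun i => _root_.pt2 (f i) (g i)) l (𝓝 (_root_.pt2 a b)) := by
  have hcont : Continuous (fun q : ℝ × ℝ => _root_.pt2 q.1 q.2) := by
    simp only [_root_.pt2, WithLp.equiv_symm_apply]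
    fun_prop
  exact (hcont.tendsto (a, b)).comp (hf.prodMk_nhds hg)

lemma projSet_eq_singleton {E : Type*} [NormedAddCommGroup E] {S : Set E} {x s₀ : E}
    (h₀ : s₀ ∈ S) (h : ∀ s ∈ S, s ≠ s₀ → dist x s₀ < dist x s) : projSet S x = {s₀} := by
  have hinf : infDist x S = dist x s₀ :=
    le_antisymm (infDist_le_dist_of_mem h₀) <| (le_infDist ⟨s₀, h₀⟩).2 fun s hs => by
      rcases eq_or_ne s s₀ with rfl | hne
      exacts [le_rfl, (h s hs hne).le]
  ext s
  simp only [projSet, mem_ofPred_eq, mem_singleton_iff, ← dist_eq_norm, hinf]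
  constructor
  · rintro ⟨hs, hd⟩
    by_contra hne
    exact (h s hs hne).ne' hd
  · rintro rfl
    exact ⟨h₀, rfl⟩

lemma cubic_strictMono : StrictMono (fun u : ℝ => u * (2 + u ^ 2 / 2)) := fun a b hab => by
  nlinarith [sq_nonneg (a + b), sq_nonneg a, sq_nonneg b]

lemma cubic_surjective : Function.Surjective (fun u : ℝ => u * (2 + u ^ 2 / 2)) := by
  refine (by fun_prop : Continuous (fun u : ℝ => u * (2 + u ^ 2 / 2))).surjective ?_ ?_
  · refine tendsto_atTop_mono' atTop ?_ tendsto_id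
    filter_upwards [eventually_ge_atTop 0] with u (hu : 0 ≤ u)
    show u ≤ _
    nlinarith [sq_nonneg u]
  · refine tendsto_atBot_mono' atBot ?_ tendsto_id
    filter_upwards [eventually_le_atBot 0] with u (hu : u ≤ 0)
    show _ ≤ u
    nlinarith [sq_nonneg u]

lemma abs_le_half_of_cubic_eq {u x : ℝ} (h : u * (2 + u ^ 2 / 2) = x) : |u| ≤ |x| / 2 := by
  rw [← h, abs_mul, abs_of_pos (by positivity : (0 : ℝ) < 2 + u ^ 2 / 2)]
  nlinarith [abs_nonneg u, sq_nonneg u]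

lemma sq_dist_parabB_ge (u t s : ℝ) (hs : 1 + t ^ 2 / 2 ≤ s) :
    (u * (2 + u ^ 2 / 2) - u) ^ 2 + (0 - (1 + u ^ 2 / 2)) ^ 2
        + (2 * (t - u) ^ 2 + (s - (1 + t ^ 2 / 2)) ^ 2)
      ≤ (u * (2 + u ^ 2 / 2) - t) ^ 2 + (0 - s) ^ 2 := by
  -- `s² - c² ≥ (s - c)²` for `0 ≤ c ≤ s`, and the boundary term factors as in the header
  have hboundary : (s - (1 + t ^ 2 / 2)) ^ 2 ≤ s ^ 2 - (1 + t ^ 2 / 2) ^ 2 := by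
    nlinarith [sq_nonneg t]
  have hcurve : (u * (2 + u ^ 2 / 2) - t) ^ 2 + (1 + t ^ 2 / 2) ^ 2
      - ((u * (2 + u ^ 2 / 2) - u) ^ 2 + (1 + u ^ 2 / 2) ^ 2)
      = (t - u) ^ 2 * (((t + u) ^ 2 + 2 * u ^ 2) / 4 + 2) := by ring
  nlinarith [mul_nonneg (sq_nonneg (t - u)) (sq_nonneg (t + u)),
    mul_nonneg (sq_nonneg (t - u)) (sq_nonneg u)]

theorem projSet_parabB {x u : ℝ} (hu : u * (2 + u ^ 2 / 2) = x) :
    projSet parabB (pt2 x 0) = {pt2 u (1 + u ^ 2 / 2)} := by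
  subst hu
  refine projSet_eq_singleton (by simp [parabB]) fun p hp hne => ?_
  rw [← pt2_eta p] at hne ⊢
  refine dist_pt2_lt_dist_pt2 (lt_of_lt_of_le (lt_add_of_pos_right _ ?_)
    (sq_dist_parabB_ge u (p 0) (p 1) hp))
  rcases eq_or_ne (p 0) u with rfl | h0
  · have h1 : p 1 - (1 + p 0 ^ 2 / 2) ≠ 0 := fun h1 => hne (by rw [sub_eq_zero.mp h1])
    simp only [sub_self]
    positivity
  · have h0 : p 0 - u ≠ 0 := sub_ne_zero.mpr h0
    positivity

theorem projSet_axisA (u v : ℝ) : projSet axisA (pt2 u v) = {pt2 u 0} := by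
  refine projSet_eq_singleton rfl fun p (hp : p 1 = 0) hne => ?_
  rw [← pt2_eta p, hp] at hne ⊢
  have h0 : u - p 0 ≠ 0 := fun h0 => hne (by rw [← sub_eq_zero.mp h0])
  refine dist_pt2_lt_dist_pt2 ?_
  simpa using (by positivity : 0 < (u - p 0) ^ 2)

section Iterates

variable {x : ℕ → ℝ} (hrec : ∀ k, x (k + 1) * (2 + x (k + 1) ^ 2 / 2) = x k)
include hrec

lemma iterate_ne_zero (hx₀ : x 0 ≠ 0) (k : ℕ) : x k ≠ 0 := by
  induction k with
  | zero => exact hx₀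
  | succ k ih => exact fun h => ih (by rw [← hrec k, h]; ring)

lemma tendsto_iterate_zero : Tendsto x atTop (𝓝 0) := by
  have hgeom (k : ℕ) : |x k| ≤ (1 / 2) ^ k * |x 0| :=
    le_geom (u := fun k => |x k|) (by norm_num) k fun j _ => by
      linarith [abs_le_half_of_cubic_eq (hrec j)]
  refine squeeze_zero_norm hgeom ?_
  simpa using (tendsto_pow_atTop_nhds_zero_of_lt_one (by norm_num : (0 : ℝ) ≤ 1 / 2)
    (by norm_num)).mul_const |x 0|

lemma tendsto_iterate_ratio (hx₀ : x 0 ≠ 0) :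
    Tendsto (fun k => x (k + 1) / x k) atTop (𝓝 (1 / 2)) := by
  have hratio (k : ℕ) : x (k + 1) / x k = 1 / (2 + x (k + 1) ^ 2 / 2) := by
    rw [← hrec k]
    field_simp [iterate_ne_zero hrec hx₀ (k + 1)]
  have hcont : ContinuousAt (fun y : ℝ => 1 / (2 + y ^ 2 / 2)) 0 :=
    (continuous_const.div (by fun_prop) fun y => by positivity).continuousAt
  have hsucc := (tendsto_iterate_zero hrec).comp (tendsto_add_atTop_nat 1)
  simp_rw [hratio]
  simpa [Function.comp_def] using hcont.tendsto.comp hsucc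

end Iterates

/-- linear rate 1/2 for the shifted parabola. The equation
`u(2 + u²/2) = x` has a unique solution `u = T(x)`; the projections of `(x,0)` on `B` and
of points above the axis on `A` are as described; and the alternating projection iterates
`x_{k+1} = T(x_k)` satisfy `x_k → 0`, `x_{k+1}/x_k → 1/2`, with `a_k → (0,0)`,
`b_k → (0,1)` realizing the gap of distance 1 at asymptotic linear rate 1/2. -/
theorem statement19 :
    (∀ x : ℝ, ∃! u : ℝ, u * (2 + u^2/2) = x) ∧
    (∀ x u : ℝ, u * (2 + u^2/2) = x →
      projSet parabB (pt2 x 0) = {pt2 u (1 + u^2/2)}) ∧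
    (∀ u v : ℝ, 0 < v → projSet axisA (pt2 u v) = {pt2 u 0}) ∧
    (∀ x : ℕ → ℝ, x 0 ≠ 0 → (∀ k, x (k+1) * (2 + (x (k+1))^2/2) = x k) →
      (∀ k, pt2 (x (k+1)) (1 + (x (k+1))^2/2) ∈ projSet parabB (pt2 (x k) 0) ∧
        pt2 (x (k+1)) 0 ∈ projSet axisA (pt2 (x (k+1)) (1 + (x (k+1))^2/2))) ∧
      Tendsto x atTop (𝓝 0) ∧
      Tendsto (fun k => x (k+1) / x k) atTop (𝓝 (1/2)) ∧
      Tendsto (fun k => pt2 (x k) 0) atTop (𝓝 (pt2 0 0)) ∧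
      Tendsto (fun k => pt2 (x (k+1)) (1 + (x (k+1))^2/2)) atTop (𝓝 (pt2 0 1))) := by
  refine ⟨fun x => ?_, fun x u hu => projSet_parabB hu, fun u v _ => projSet_axisA u v,
    fun x hx₀ hrec => ?_⟩
  · obtain ⟨u, hu⟩ := cubic_surjective x
    exact ⟨u, hu, fun y hy => cubic_strictMono.injective (hy.trans hu.symm)⟩
  have hlim := tendsto_iterate_zero hrec
  have hlim_succ := hlim.comp (tendsto_add_atTop_nat 1)
  refine ⟨fun k => ⟨?_, ?_⟩, hlim, tendsto_iterate_ratio hrec hx₀,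
    hlim.pt2 tendsto_const_nhds, hlim_succ.pt2 ?_⟩
  · rw [projSet_parabB (hrec k)]; rfl
  · rw [projSet_axisA]; rfl
  · simpa using ((hlim_succ.pow 2).div_const 2).const_add 1
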